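/- arXiv:2410.13168 — 4 statements merged into one kernel-verified Lean document; each statement's English description precedes it below -/
import Mathlib

section
/- Let R = ℚ[x₀,x₁,x₂] and let q : R → R⧸(e₁) be the quotient by the ideal generated by e₁ = x₀+x₁+x₂. Then the image under q of the set of symmetric even polynomials of R is exactly the ℚ-subalgebra of R⧸(e₁) generated by q(e₂) and q(e₃)², and the two elements q(e₂) and q(e₃)² are algebraically independent over ℚ; consequently the symmetric even polynomials in three variables modulo the relation x₀+x₁+x₂ = 0 form a polynomial ring ℚ[σ₂, σ₃²]. (This is the polynomial computation establishing Theorem 3.1 of the paper in the case n, j odd.) -/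
/-!
Symmetric polynomials are polynomials `F(e₁, e₂, e₃)` in the elementary symmetric ones, and
`xᵢ ↦ -xᵢ` acts on them by `eₖ ↦ (-1)ᵏ eₖ`. So a symmetric even `p` is `F(e₁, e₂, e₃)` with `F`
invariant under `(a, b, c) ↦ (-a, b, -c)`; modulo `e₁` it becomes `G(e₂, e₃)` with
`G(b, c) = F(0, b, c)` even in `c`, hence a polynomial in `e₂` and `e₃²`.

For the independence, a relation `P(e₂, e₃) = e₁ g` forces `g` to be symmetric (cancel `e₁`), so
`g = H(e₁, e₂, e₃)` and `P(b, c) = a H(a, b, c)` as polynomials; setting `a = 0` gives `P = 0`.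
Replacing `e₃` by `e₃²` preserves independence, since powers of transcendental elements are
transcendental.
-/

open MvPolynomial

/-- `R = ℚ[x₀,x₁,x₂]`. -/
abbrev R3 : Type := MvPolynomial (Fin 3) ℚ

/-- The `k`-th elementary symmetric polynomial in three variables. -/
noncomputable def sym3 (k : ℕ) : R3 := esymm (Fin 3) ℚ k

/-- The ideal generated by `e₁ = x₀ + x₁ + x₂`. -/
noncomputable def I3 : Ideal R3 := Ideal.span {sym3 1}

/-- The quotient map `q : R → R⧸(e₁)`. -/
noncomputable def q3 : R3 →+* R3 ⧸ I3 := Ideal.Quotient.mk I3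

/-- The ℚ-algebra automorphism sending each variable `xᵢ` to `-xᵢ`. -/
noncomputable def negVars3 : R3 →ₐ[ℚ] R3 := aeval fun i => -X i

/-- A polynomial is even if it is fixed by the substitution `xᵢ ↦ -xᵢ`. -/
def IsEven3 (p : R3) : Prop := negVars3 p = p

theorem AlgebraicIndependent.update_pow {ι R A : Type*} [CommRing R] [CommRing A] [Algebra R A]
    [DecidableEq ι] {x : ι → A} (hx : AlgebraicIndependent R x) (i : ι) {k : ℕ} (hk : 0 < k) :
    AlgebraicIndependent R (Function.update x i (x i ^ k)) := by
  have key (y : ι → A) := AlgebraicIndepOn.insert_iff (R := R) (x := y) (s := {i}ᶜ)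
    (Set.notMem_compl_iff.2 rfl)
  simp only [Set.insert_eq, Set.union_compl_self, AlgebraicIndepOn.univ] at key
  have hagree : Set.EqOn (Function.update x i (x i ^ k)) x {i}ᶜ := fun j hj =>
    Function.update_of_ne hj _ _
  obtain ⟨hon, htr⟩ := (key x).1 hx
  refine (key _).2 ⟨?_, ?_⟩
  · rw [AlgebraicIndepOn, funext fun j : ({i}ᶜ : Set ι) => hagree j.2]
    exact hon
  · rw [hagree.image_eq, Function.update_self]
    exact htr.pow hk

namespace MvPolynomial

variable {R : Type*} [CommRing R]

section SignChange

variable {σ : Type*} [DecidableEq σ]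

theorem aeval_update_neg_X_monomial (i : σ) (s : σ →₀ ℕ) (a : R) :
    aeval (Function.update X i (-X i)) (monomial s a) = monomial s ((-1) ^ s i * a) := by
  have hg : Function.update (X : σ → MvPolynomial σ R) i (-X i) =
      fun j => (if j = i then -1 else 1) * X j := by
    ext1 j
    rcases eq_or_ne j i with rfl | h
    · simp
    · simp [h]
  have hsign : (s.prod fun j k => (if j = i then (-1 : MvPolynomial σ R) else 1) ^ k) =
      (-1) ^ s i := by
    simp only [ite_pow, one_pow, Finsupp.prod_ite_eq', Finsupp.mem_support_iff]
    split_ifs with h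
    · rfl
    · rw [not_not.1 h, pow_zero]
  rw [hg, aeval_monomial, monomial_eq]
  simp only [mul_pow, Finsupp.prod_mul, hsign, algebraMap_eq, C_mul, C_pow, C_neg, C_1]
  ring

theorem coeff_aeval_update_neg_X (i : σ) (F : MvPolynomial σ R) (d : σ →₀ ℕ) :
    coeff d (aeval (Function.update X i (-X i)) F) = (-1) ^ d i * coeff d F := by
  induction F using induction_on' with
  | monomial s a =>
    rw [aeval_update_neg_X_monomial, coeff_monomial, coeff_monomial]
    split_ifs with h
    · rw [h]
    · rw [mul_zero]
  | add p q hp hq => rw [map_add, coeff_add, hp, hq, coeff_add, mul_add]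

theorem mem_adjoin_update_X_sq_of_aeval_update_neg_X [NoZeroDivisors R] [CharZero R] {i : σ}
    {F : MvPolynomial σ R} (hF : aeval (Function.update X i (-X i)) F = F) :
    F ∈ Algebra.adjoin R (Set.range (Function.update X i (X i ^ 2))) := by
  have heven : ∀ d ∈ F.support, Even (d i) := by
    intro d hd
    by_contra hodd
    have h := congrArg (coeff d) hF
    rw [coeff_aeval_update_neg_X, (Nat.not_even_iff_odd.1 hodd).neg_one_pow, neg_one_mul,
      CharZero.neg_eq_self_iff] at h
    exact mem_support_iff.1 hd h
  have hX : ∀ j k, (j = i → Even k) →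
      (X j : MvPolynomial σ R) ^ k ∈
        Algebra.adjoin R (Set.range (Function.update X i (X i ^ 2))) := by
    intro j k hk
    rcases eq_or_ne j i with rfl | hj
    · obtain ⟨m, rfl⟩ := hk rfl
      rw [← two_mul, pow_mul]
      exact pow_mem (Algebra.subset_adjoin (Set.mem_range.2 ⟨j, Function.update_self _ _ _⟩)) _
    · exact pow_mem (Algebra.subset_adjoin (Set.mem_range.2 ⟨j, Function.update_of_ne hj _ _⟩)) _
  rw [F.as_sum]
  refine Subalgebra.sum_mem _ fun d hd => ?_
  rw [monomial_eq]
  refine Subalgebra.mul_mem _ (Subalgebra.algebraMap_mem _ _) (Subalgebra.prod_mem _ ?_)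
  rintro j -
  exact hX j (d j) fun hj => hj ▸ heven d hd

theorem aeval_mem_adjoin_update_sq_of_aeval_update_neg_X [NoZeroDivisors R] [CharZero R]
    {S : Type*} [CommRing S] [Algebra R S] (v : σ → S) {i : σ} {F : MvPolynomial σ R}
    (hF : aeval (Function.update (X : σ → MvPolynomial σ R) i (-X i)) F = F) :
    aeval v F ∈ Algebra.adjoin R (Set.range (Function.update v i (v i ^ 2))) := by
  have hmap := AlgHom.map_adjoin (aeval v)
    (Set.range (Function.update (X : σ → MvPolynomial σ R) i (X i ^ 2)))
  rw [← Set.range_comp, Function.comp_update, map_pow, aeval_X,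
    show ⇑(aeval v) ∘ X = v from _root_.funext (aeval_X v)] at hmap
  exact hmap ▸ Subalgebra.mem_map.2 ⟨F, mem_adjoin_update_X_sq_of_aeval_update_neg_X hF, rfl⟩

end SignChange

theorem aeval_neg_X_esymm (σ : Type*) [Fintype σ] (k : ℕ) :
    aeval (fun i => -X i : σ → MvPolynomial σ R) (esymm σ R k) = (-1) ^ k * esymm σ R k := by
  rw [esymm, map_sum, Finset.mul_sum]
  refine Finset.sum_congr rfl fun s hs => ?_
  rw [map_prod, Finset.prod_congr rfl fun i _ =>
      (aeval_X _ i).trans (neg_eq_neg_one_mul (X i : MvPolynomial σ R)), Finset.prod_mul_distrib,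
    Finset.prod_const, (Finset.mem_powersetCard.1 hs).2]

theorem aeval_neg_X_aeval_esymm (σ : Type*) [Fintype σ] {n : ℕ} (F : MvPolynomial (Fin n) R) :
    aeval (fun i => -X i : σ → MvPolynomial σ R) (aeval (fun k : Fin n => esymm σ R (k + 1)) F)
      = aeval (fun k : Fin n => esymm σ R (k + 1))
          (aeval (fun k : Fin n => (-1) ^ ((k : ℕ) + 1) * (X k : MvPolynomial (Fin n) R)) F) := by
  rw [comp_aeval_apply, comp_aeval_apply]
  congr 2
  funext k
  rw [aeval_neg_X_esymm, map_mul, map_pow, map_neg, map_one, aeval_X]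

theorem aeval_esymm_injective (n : ℕ) :
    Function.Injective (aeval (R := R) fun i : Fin n => esymm (Fin n) R (i + 1)) := fun p q h =>
  esymmAlgHom_fin_injective R le_rfl (Subtype.ext (by simpa only [esymmAlgHom_apply] using h))

theorem IsSymmetric.exists_aeval_esymm {n : ℕ} {p : MvPolynomial (Fin n) R}
    (hp : p.IsSymmetric) :
    ∃ F, aeval (R := R) (fun i : Fin n => esymm (Fin n) R (i + 1)) F = p := by
  obtain ⟨F, hF⟩ := (esymmAlgHom_fin_bijective R n).2 ⟨p, hp⟩
  exact ⟨F, by rw [← esymmAlgHom_apply, hF]⟩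

theorem IsSymmetric.of_mul_left [IsDomain R] {σ : Type*} {f g : MvPolynomial σ R}
    (hf : f.IsSymmetric) (hf0 : f ≠ 0) (hfg : (f * g).IsSymmetric) : g.IsSymmetric := fun e =>
  mul_left_cancel₀ hf0 (by rw [← hfg e, map_mul, hf e])

theorem algebraicIndependent_esymm_mod_esymm_one [IsDomain R] (n : ℕ) :
    AlgebraicIndependent R fun j : Fin n =>
      Ideal.Quotient.mk (Ideal.span {esymm (Fin (n + 1)) R 1}) (esymm (Fin (n + 1)) R (j + 2)) := by
  set E : Fin (n + 1) → MvPolynomial (Fin (n + 1)) R := fun k => esymm (Fin (n + 1)) R (k + 1)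
  have hE0 : E 0 ≠ 0 := by
    rw [← aeval_X (R := R) E 0, ← map_zero (aeval (R := R) E)]
    exact (aeval_esymm_injective (n + 1)).ne (X_ne_zero 0)
  rw [algebraicIndependent_iff]
  intro P hP
  have hPE : aeval (R := R) (fun j : Fin n => esymm (Fin (n + 1)) R (j + 2)) P =
      aeval E (rename Fin.succ P) := by
    rw [aeval_rename]; rfl
  rw [← Ideal.Quotient.mkₐ_eq_mk R, ← comp_aeval_apply, Ideal.Quotient.mkₐ_eq_mk,
    Ideal.Quotient.eq_zero_iff_mem, Ideal.mem_span_singleton', hPE] at hP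
  obtain ⟨g, hg⟩ := hP
  have hgsym : g.IsSymmetric := (esymm_isSymmetric _ R 1).of_mul_left hE0 (by
    rw [mul_comm, hg, ← esymmAlgHom_apply]; exact Subtype.prop _)
  obtain ⟨H, rfl⟩ := IsSymmetric.exists_aeval_esymm hgsym
  have hsplit : rename Fin.succ P = X 0 * H := aeval_esymm_injective (n + 1) (by
    rw [map_mul, aeval_X, ← hg, mul_comm]; rfl)
  have := congrArg (aeval (R := R) (Fin.cons 0 X : Fin (n + 1) → MvPolynomial (Fin n) R)) hsplit
  rwa [aeval_rename, Fin.cons_comp_succ, aeval_X_left_apply, map_mul, aeval_X, Fin.cons_zero,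
    zero_mul] at this

end MvPolynomial

noncomputable def symmetricEvenSubalgebra3 : Subalgebra ℚ R3 :=
  symmetricSubalgebra (Fin 3) ℚ ⊓ AlgHom.equalizer negVars3 (AlgHom.id ℚ R3)

theorem q3_sym3_one : q3 (sym3 1) = 0 :=
  Ideal.Quotient.eq_zero_iff_mem.2 (Ideal.subset_span rfl)

theorem negVars3_sym3 (k : ℕ) : negVars3 (sym3 k) = (-1) ^ k * sym3 k :=
  aeval_neg_X_esymm (Fin 3) k

theorem adjoin_sym3_two_sym3_three_sq_le :
    Algebra.adjoin ℚ {sym3 2, sym3 3 ^ 2} ≤ symmetricEvenSubalgebra3 := by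
  rw [Algebra.adjoin_le_iff, Set.insert_subset_iff, Set.singleton_subset_iff]
  have hsym (k : ℕ) : sym3 k ∈ symmetricSubalgebra (Fin 3) ℚ := esymm_isSymmetric (Fin 3) ℚ k
  refine ⟨⟨hsym 2, ?_⟩, ⟨pow_mem (hsym 3) 2, ?_⟩⟩
  · change negVars3 (sym3 2) = sym3 2
    rw [negVars3_sym3]
    ring
  · change negVars3 (sym3 3 ^ 2) = sym3 3 ^ 2
    rw [map_pow, negVars3_sym3]
    ring

theorem q3_aeval_esymm (F : MvPolynomial (Fin 3) ℚ) :
    q3 (aeval (fun k : Fin 3 => esymm (Fin 3) ℚ (k + 1)) F) =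
      aeval ![q3 (sym3 2), q3 (sym3 3)]
        (aeval (![0, X 0, X 1] : Fin 3 → MvPolynomial (Fin 2) ℚ) F) := by
  change Ideal.Quotient.mkₐ ℚ I3 _ = _
  rw [comp_aeval_apply, comp_aeval_apply]
  congr 2
  funext k
  fin_cases k
  · exact q3_sym3_one.trans (map_zero _).symm
  · exact (aeval_X (R := ℚ) ![q3 (sym3 2), q3 (sym3 3)] 0).symm
  · exact (aeval_X (R := ℚ) ![q3 (sym3 2), q3 (sym3 3)] 1).symm

theorem aeval_update_neg_X_aeval_of_aeval_neg_one_pow_X {F : MvPolynomial (Fin 3) ℚ}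
    (hF : aeval (fun k : Fin 3 => (-1) ^ ((k : ℕ) + 1) * X k) F = F) :
    aeval (Function.update X 1 (-X 1)) (aeval (![0, X 0, X 1] : Fin 3 → MvPolynomial (Fin 2) ℚ) F) =
      aeval (![0, X 0, X 1] : Fin 3 → MvPolynomial (Fin 2) ℚ) F := by
  conv_rhs => rw [← hF]
  rw [comp_aeval_apply, comp_aeval_apply]
  congr 2
  funext k
  fin_cases k <;> norm_num

theorem q3_mem_adjoin_of_mem_symmetricEvenSubalgebra3 {p : R3}
    (hp : p ∈ symmetricEvenSubalgebra3) :
    q3 p ∈ Algebra.adjoin ℚ {q3 (sym3 2), q3 (sym3 3) ^ 2} := by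
  obtain ⟨hsym, heven⟩ := hp
  obtain ⟨F, rfl⟩ := IsSymmetric.exists_aeval_esymm hsym
  have hF : aeval (fun k : Fin 3 => (-1) ^ ((k : ℕ) + 1) * X k) F = F :=
    aeval_esymm_injective 3 ((aeval_neg_X_aeval_esymm (Fin 3) F).symm.trans heven)
  have hmem := aeval_mem_adjoin_update_sq_of_aeval_update_neg_X ![q3 (sym3 2), q3 (sym3 3)]
    (aeval_update_neg_X_aeval_of_aeval_neg_one_pow_X hF)
  have hrange : Set.range (Function.update ![q3 (sym3 2), q3 (sym3 3)] 1
      (![q3 (sym3 2), q3 (sym3 3)] 1 ^ 2)) = {q3 (sym3 2), q3 (sym3 3) ^ 2} := by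
    rw [show Function.update ![q3 (sym3 2), q3 (sym3 3)] 1 (![q3 (sym3 2), q3 (sym3 3)] 1 ^ 2) =
      ![q3 (sym3 2), q3 (sym3 3) ^ 2] by ext j; fin_cases j <;> rfl]
    simp [Set.pair_comm]
  rwa [← q3_aeval_esymm, hrange] at hmem

/-- The symmetric even polynomials in three variables, modulo the relation
`x₀ + x₁ + x₂ = 0`, form the polynomial algebra `ℚ[σ₂, σ₃²]`: the image of the set of
symmetric even polynomials under the quotient map is the subalgebra generated by
`q(e₂)` and `q(e₃)²`, and these two elements are algebraically independent over `ℚ`.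
(Theorem 3.1 of the paper, case `n`, `j` odd.) -/
theorem symmetric_even_mod_e1 :
    (⇑q3 '' {p : R3 | p.IsSymmetric ∧ IsEven3 p}
      = ↑(Algebra.adjoin ℚ ({q3 (sym3 2), q3 (sym3 3) ^ 2} : Set (R3 ⧸ I3))))
    ∧ AlgebraicIndependent ℚ ![q3 (sym3 2), q3 (sym3 3) ^ 2] := by
  constructor
  · have hmap : (Algebra.adjoin ℚ {sym3 2, sym3 3 ^ 2}).map (Ideal.Quotient.mkₐ ℚ I3) =
        Algebra.adjoin ℚ {q3 (sym3 2), q3 (sym3 3) ^ 2} := by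
      rw [AlgHom.map_adjoin, Set.image_insert_eq, Set.image_singleton, map_pow]
      rfl
    change ⇑(Ideal.Quotient.mkₐ ℚ I3) '' (symmetricEvenSubalgebra3 : Set R3) = _
    rw [← Subalgebra.coe_map]
    congr 1
    refine le_antisymm ?_ (hmap ▸ Subalgebra.map_mono adjoin_sym3_two_sym3_three_sq_le)
    rintro _ ⟨p, hp, rfl⟩
    exact q3_mem_adjoin_of_mem_symmetricEvenSubalgebra3 hp
  · have h : AlgebraicIndependent ℚ
        (Function.update (fun j : Fin 2 => q3 (sym3 (j + 2))) 1 (q3 (sym3 3) ^ 2)) :=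
      (algebraicIndependent_esymm_mod_esymm_one 2).update_pow 1 two_pos
    convert h using 1
    funext j
    fin_cases j <;> rfl
end

section
/- Let S = ℚ[y₀,y₁,y₂,y₃] and let q : S → S⧸(e₁) be the quotient by the ideal generated by e₁ = y₀+y₁+y₂+y₃. Then the image under q of the set of symmetric even polynomials of S is exactly the ℚ-subalgebra of S⧸(e₁) generated by q(e₂), q(e₃)² and q(e₄), and the three elements q(e₂), q(e₃)², q(e₄) are algebraically independent over ℚ; consequently the symmetric even polynomials in four variables modulo the relation y₀+y₁+y₂+y₃ = 0 form a polynomial ring ℚ[τ₂, τ₃², τ₄]. (This is the polynomial computation underlying Theorem 3.2 of the paper, due to Moskovich–Ohtsuki, for n, j odd.) -/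
open MvPolynomial

/-- `S = ℚ[y₀,y₁,y₂,y₃]`. -/
abbrev S4 : Type := MvPolynomial (Fin 4) ℚ

/-- The `k`-th elementary symmetric polynomial in four variables. -/
noncomputable def sym4 (k : ℕ) : S4 := esymm (Fin 4) ℚ k

/-- The ideal generated by `e₁ = y₀ + y₁ + y₂ + y₃`. -/
noncomputable def I4 : Ideal S4 := Ideal.span {sym4 1}

/-- The quotient map `q : S → S⧸(e₁)`. -/
noncomputable def q4 : S4 →+* S4 ⧸ I4 := Ideal.Quotient.mk I4

/-- The ℚ-algebra automorphism sending each variable `yᵢ` to `-yᵢ`. -/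
noncomputable def negVars4 : S4 →ₐ[ℚ] S4 := aeval fun i => -X i

/-- A polynomial is even if it is fixed by the substitution `yᵢ ↦ -yᵢ`. -/
def IsEven4 (p : S4) : Prop := negVars4 p = p

/-! ### Auxiliary definitions and lemmas -/

/-- The elementary symmetric polynomials `e₁, e₂, e₃, e₄` as a family over `Fin 4`. -/
noncomputable def e4 : Fin 4 → S4 := fun i => sym4 ((i : ℕ) + 1)

lemma e4inj : Function.Injective (aeval e4 : MvPolynomial (Fin 4) ℚ →ₐ[ℚ] S4) := by
  have h : ⇑(aeval e4 : MvPolynomial (Fin 4) ℚ →ₐ[ℚ] S4)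
      = Subtype.val ∘ ⇑(esymmAlgHom (Fin 4) ℚ 4) := by
    funext p
    rw [Function.comp_apply, esymmAlgHom_apply]
    rfl
  rw [h]
  exact Subtype.val_injective.comp (esymmAlgHom_fin_injective ℚ le_rfl)

lemma e4surj (p : S4) (hp : p.IsSymmetric) : ∃ F : MvPolynomial (Fin 4) ℚ, aeval e4 F = p := by
  have hs : Function.Surjective (esymmAlgHom (Fin 4) ℚ 4) :=
    esymmAlgHom_fin_surjective ℚ le_rfl
  obtain ⟨F, hF⟩ := hs ⟨p, (mem_symmetricSubalgebra p).2 hp⟩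
  refine ⟨F, ?_⟩
  have := congrArg Subtype.val hF
  rwa [esymmAlgHom_apply] at this

lemma aeval_e4_isSymmetric (H : MvPolynomial (Fin 4) ℚ) : (aeval e4 H).IsSymmetric := by
  have := ((esymmAlgHom (Fin 4) ℚ 4) H).2
  rw [mem_symmetricSubalgebra, esymmAlgHom_apply] at this
  exact this

lemma sym4_one_ne_zero : sym4 1 ≠ 0 := by
  intro h
  have := congrArg (eval fun _ => (1:ℚ)) h
  rw [sym4, esymm_one] at this
  simp at this

lemma negVars4_esymm (k : ℕ) : negVars4 (sym4 k) = (-1) ^ k * sym4 k := by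
  rw [sym4, esymm, negVars4, map_sum, Finset.mul_sum]
  refine Finset.sum_congr rfl fun t ht => ?_
  rw [map_prod]
  have : ∀ i ∈ t, aeval (fun i : Fin 4 => -X i) (X i : S4) = (-1 : S4) * X i := by
    intro i _; rw [aeval_X]; ring
  rw [Finset.prod_congr rfl this, Finset.prod_mul_distrib, Finset.prod_const,
    (Finset.mem_powersetCard.1 ht).2]

lemma coeff_sum_tmono {n m : ℕ} (T : (Fin n →₀ ℕ) → (Fin m →₀ ℕ)) (hT : Function.Injective T)
    (s : Finset (Fin n →₀ ℕ)) (g : (Fin n →₀ ℕ) → ℚ) (d : Fin n →₀ ℕ) (hd : d ∉ s → g d = 0) :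
    coeff (T d) (∑ d' ∈ s, monomial (T d') (g d')) = g d := by
  rw [coeff_sum]
  simp_rw [coeff_monomial, hT.eq_iff]
  rw [Finset.sum_ite_eq' s d g]
  split
  · rfl
  · exact (hd (by assumption)).symm

lemma d4_eq (d : Fin 4 →₀ ℕ) :
    d = Finsupp.single 0 (d 0) + Finsupp.single 1 (d 1)
      + Finsupp.single 2 (d 2) + Finsupp.single 3 (d 3) := by
  ext i
  fin_cases i <;> simp [Finsupp.single_apply]

lemma tau_monomial (d : Fin 4 →₀ ℕ) (c : ℚ) :
    aeval (![-X 0, X 1, -X 2, X 3] : Fin 4 → S4) (monomial d c)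
      = monomial d ((-1) ^ (d 0 + d 2) * c) := by
  rw [aeval_monomial, Finsupp.prod_fintype _ _ (fun i => pow_zero _), Fin.prod_univ_four]
  simp only [Matrix.cons_val_zero, Matrix.cons_val_one, Matrix.head_cons, Matrix.cons_val_two,
    Matrix.tail_cons, Matrix.cons_val_three]
  rw [neg_pow (X 0 : S4) (d 0), neg_pow (X 2 : S4) (d 2), show ((-1 : S4)) = C (-1) by simp, ← C_pow,
    ← C_pow, algebraMap_eq]
  rw [X_pow_eq_monomial, X_pow_eq_monomial, X_pow_eq_monomial, X_pow_eq_monomial]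
  simp only [C_mul_monomial, monomial_mul, mul_one, one_mul]
  rw [← d4_eq d]
  congr 1
  ring

lemma q4_sym1 : q4 (sym4 1) = 0 :=
  Ideal.Quotient.eq_zero_iff_mem.2 (Ideal.subset_span rfl)

/-- The image under `q4` of any even symmetric polynomial lies in the subalgebra generated by
`q(e₂)`, `q(e₃)²`, `q(e₄)`. -/
lemma key4 (p : S4) (hsym : p.IsSymmetric) (heven : IsEven4 p) :
    q4 p ∈ Algebra.adjoin ℚ
      ({q4 (sym4 2), q4 (sym4 3) ^ 2, q4 (sym4 4)} : Set (S4 ⧸ I4)) := by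
  obtain ⟨F, hF⟩ := e4surj p hsym
  -- the sign-flipped F equals F
  have htau : aeval (![-X 0, X 1, -X 2, X 3] : Fin 4 → S4) F = F := by
    apply e4inj
    have h1 : aeval e4 (aeval (![-X 0, X 1, -X 2, X 3] : Fin 4 → S4) F)
        = aeval (fun i => aeval e4 ((![-X 0, X 1, -X 2, X 3] : Fin 4 → S4) i)) F := by
      rw [← AlgHom.comp_apply, comp_aeval]
    have h2 : (fun i => aeval e4 ((![-X 0, X 1, -X 2, X 3] : Fin 4 → S4) i))
        = fun i => negVars4 (e4 i) := by
      funext i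
      fin_cases i
      · show aeval e4 (-X 0 : MvPolynomial (Fin 4) ℚ) = negVars4 (sym4 1)
        rw [map_neg, aeval_X, negVars4_esymm, show (e4 0 : S4) = sym4 1 from rfl]
        ring
      · show aeval e4 (X 1 : MvPolynomial (Fin 4) ℚ) = negVars4 (sym4 2)
        rw [aeval_X, negVars4_esymm, show (e4 1 : S4) = sym4 2 from rfl]
        ring
      · show aeval e4 (-X 2 : MvPolynomial (Fin 4) ℚ) = negVars4 (sym4 3)
        rw [map_neg, aeval_X, negVars4_esymm, show (e4 2 : S4) = sym4 3 from rfl]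
        ring
      · show aeval e4 (X 3 : MvPolynomial (Fin 4) ℚ) = negVars4 (sym4 4)
        rw [aeval_X, negVars4_esymm, show (e4 3 : S4) = sym4 4 from rfl]
        ring
    have h3 : aeval (fun i => negVars4 (e4 i)) F = negVars4 (aeval e4 F) := by
      rw [← comp_aeval, AlgHom.comp_apply]
    rw [h1, h2, h3, hF, heven]
  have hcoeff : ∀ d : Fin 4 →₀ ℕ, ((-1:ℚ)) ^ (d 0 + d 2) * coeff d F = coeff d F := by
    intro d
    have hsum : aeval (![-X 0, X 1, -X 2, X 3] : Fin 4 → S4) F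
        = ∑ d' ∈ F.support, monomial d' ((-1:ℚ) ^ (d' 0 + d' 2) * coeff d' F) := by
      conv_lhs => rw [F.as_sum]
      rw [map_sum]
      exact Finset.sum_congr rfl fun d' _ => tau_monomial d' (coeff d' F)
    have hc : coeff d (∑ d' ∈ F.support, monomial d' ((-1:ℚ) ^ (d' 0 + d' 2) * coeff d' F))
        = (-1:ℚ) ^ (d 0 + d 2) * coeff d F :=
      coeff_sum_tmono (fun x => x) (fun a b h => h) F.support
        (fun d' => (-1:ℚ) ^ (d' 0 + d' 2) * coeff d' F) d
        (fun h => by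
          show (-1:ℚ) ^ (d 0 + d 2) * coeff d F = 0
          rw [notMem_support_iff.1 h, mul_zero])
    conv_rhs => rw [← htau, hsum]
    rw [hc]
  -- expand q4 p
  set v : Fin 4 → (S4 ⧸ I4) := ![0, q4 (sym4 2), q4 (sym4 3), q4 (sym4 4)] with hv
  have hqp : q4 p = aeval v F := by
    rw [← hF]
    have h1 : q4 (aeval e4 F) = aeval (fun i => (Ideal.Quotient.mkₐ ℚ I4) (e4 i)) F := by
      rw [← comp_aeval]
      rfl
    rw [h1]
    have h2 : (fun i => (Ideal.Quotient.mkₐ ℚ I4) (e4 i)) = v := by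
      funext i
      fin_cases i
      · exact q4_sym1
      · rfl
      · rfl
      · rfl
    rw [h2]
  rw [hqp, F.as_sum, map_sum]
  apply Subalgebra.sum_mem
  intro d _
  rw [aeval_monomial, Finsupp.prod_fintype _ _ (fun i => pow_zero _), Fin.prod_univ_four]
  simp only [hv, Matrix.cons_val_zero, Matrix.cons_val_one, Matrix.head_cons, Matrix.cons_val_two,
    Matrix.tail_cons, Matrix.cons_val_three]
  by_cases h0 : d 0 = 0
  · rcases Nat.even_or_odd (d 2) with he | ho
    · obtain ⟨m, hm⟩ := he
      rw [h0, pow_zero, one_mul, hm, ← two_mul, pow_mul]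
      have ha : q4 (sym4 2) ∈ Algebra.adjoin ℚ
          ({q4 (sym4 2), q4 (sym4 3) ^ 2, q4 (sym4 4)} : Set (S4 ⧸ I4)) :=
        Algebra.subset_adjoin (by simp)
      have hb : q4 (sym4 3) ^ 2 ∈ Algebra.adjoin ℚ
          ({q4 (sym4 2), q4 (sym4 3) ^ 2, q4 (sym4 4)} : Set (S4 ⧸ I4)) :=
        Algebra.subset_adjoin (by simp)
      have hcc : q4 (sym4 4) ∈ Algebra.adjoin ℚ
          ({q4 (sym4 2), q4 (sym4 3) ^ 2, q4 (sym4 4)} : Set (S4 ⧸ I4)) :=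
        Algebra.subset_adjoin (by simp)
      exact mul_mem (Subalgebra.algebraMap_mem _ _)
        (mul_mem (mul_mem (pow_mem ha _) (pow_mem hb _)) (pow_mem hcc _))
    · have hsign : ((-1:ℚ)) ^ (d 0 + d 2) = -1 := by
        rw [h0, zero_add]
        exact ho.neg_one_pow
      have hc0 : coeff d F = 0 := by
        have := hcoeff d
        rw [hsign] at this
        linarith
      rw [hc0]
      simp only [map_zero, zero_mul]
      exact Subalgebra.zero_mem _
  · rw [zero_pow h0]
    simp only [zero_mul, mul_zero]
    exact Subalgebra.zero_mem _

noncomputable def T43 : (Fin 3 →₀ ℕ) → (Fin 4 →₀ ℕ) :=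
  fun d => Finsupp.equivFunOnFinite.symm ![0, d 0, 2 * d 1, d 2]

lemma T43_apply (d : Fin 3 →₀ ℕ) (i : Fin 4) : T43 d i = ![0, d 0, 2 * d 1, d 2] i := rfl

lemma T43_eq (d : Fin 3 →₀ ℕ) :
    T43 d = Finsupp.single 1 (d 0) + Finsupp.single 2 (2 * d 1) + Finsupp.single 3 (d 2) := by
  ext i
  fin_cases i <;> simp [T43_apply, Finsupp.single_apply]

lemma T43_inj : Function.Injective T43 := by
  intro d d' h
  have h1 := congrArg (fun f => f 1) (congrArg Finsupp.equivFunOnFinite h)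
  have h2 := congrArg (fun f => f 2) (congrArg Finsupp.equivFunOnFinite h)
  have h3 := congrArg (fun f => f 3) (congrArg Finsupp.equivFunOnFinite h)
  simp [T43] at h1 h2 h3
  ext i
  fin_cases i <;> simp [h1, h2, h3]

lemma aeval_u_monomial (d : Fin 3 →₀ ℕ) (c : ℚ) :
    aeval (![X 1, X 2 ^ 2, X 3] : Fin 3 → S4) (monomial d c)
      = monomial (T43 d) c := by
  rw [aeval_monomial, Finsupp.prod_fintype _ _ (fun i => pow_zero _), Fin.prod_univ_three]
  simp only [Matrix.cons_val_zero, Matrix.cons_val_one, Matrix.head_cons, Matrix.cons_val_two,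
    Matrix.tail_cons]
  rw [← pow_mul, X_pow_eq_monomial, X_pow_eq_monomial, X_pow_eq_monomial, monomial_mul,
    monomial_mul, algebraMap_eq, C_mul_monomial, T43_eq, mul_one, mul_one, mul_one]

lemma part2 : AlgebraicIndependent ℚ ![q4 (sym4 2), q4 (sym4 3) ^ 2, q4 (sym4 4)] := by
  rw [algebraicIndependent_iff_injective_aeval]
  rw [injective_iff_map_eq_zero]
  intro F hF
  have hcomp : aeval e4 (aeval (![X 1, X 2 ^ 2, X 3] : Fin 3 → S4) F)
      = aeval ![sym4 2, sym4 3 ^ 2, sym4 4] F := by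
    rw [← AlgHom.comp_apply, comp_aeval]
    have hv : (fun i => aeval e4 ((![X 1, X 2 ^ 2, X 3] : Fin 3 → S4) i))
        = ![sym4 2, sym4 3 ^ 2, sym4 4] := by
      funext i
      fin_cases i <;> simp [e4] <;> rfl
    rw [hv]
  set H : MvPolynomial (Fin 4) ℚ := aeval (![X 1, X 2 ^ 2, X 3] : Fin 3 → S4) F with hH
  have hq : q4 (aeval e4 H) = 0 := by
    rw [hcomp]
    have h2 : q4 (aeval ![sym4 2, sym4 3 ^ 2, sym4 4] F)
        = aeval (fun i => (Ideal.Quotient.mkₐ ℚ I4) ((![sym4 2, sym4 3 ^ 2, sym4 4]) i)) F := by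
      rw [← comp_aeval, AlgHom.comp_apply]
      rfl
    rw [h2]
    have h3 : (fun i => (Ideal.Quotient.mkₐ ℚ I4) ((![sym4 2, sym4 3 ^ 2, sym4 4]) i))
        = ![q4 (sym4 2), q4 (sym4 3) ^ 2, q4 (sym4 4)] := by
      funext i
      fin_cases i <;> simp [Ideal.Quotient.mkₐ_eq_mk, q4]
    rw [h3, hF]
  have hmem : aeval e4 H ∈ I4 := Ideal.Quotient.eq_zero_iff_mem.1 hq
  obtain ⟨g, hg⟩ : sym4 1 ∣ aeval e4 H := (Ideal.mem_span_singleton).1 hmem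
  have hgsym : g.IsSymmetric := by
    intro σ
    have h1 : rename σ (aeval e4 H) = aeval e4 H := aeval_e4_isSymmetric H σ
    have h2 : rename σ (sym4 1) = sym4 1 := esymm_isSymmetric (Fin 4) ℚ 1 σ
    rw [hg, map_mul, h2] at h1
    exact mul_left_cancel₀ sym4_one_ne_zero h1
  obtain ⟨G, hG⟩ := e4surj g hgsym
  have hHG : H = X 0 * G := by
    apply e4inj
    rw [map_mul, hG, aeval_X, hg]
    rfl
  have hcoeffH : ∀ d : Fin 3 →₀ ℕ, coeff (T43 d) H = coeff d F := by
    intro d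
    have hsum : H = ∑ d' ∈ F.support, monomial (T43 d') (coeff d' F) := by
      conv_lhs => rw [hH, F.as_sum]
      rw [map_sum]
      exact Finset.sum_congr rfl fun d' _ => aeval_u_monomial d' (coeff d' F)
    rw [hsum]
    exact coeff_sum_tmono T43 T43_inj F.support (fun d' => coeff d' F) d
      (fun h => notMem_support_iff.1 h)
  have hzero : ∀ d : Fin 3 →₀ ℕ, coeff (T43 d) (X 0 * G) = 0 := by
    intro d
    classical
    rw [coeff_X_mul', if_neg]
    simp [Finsupp.mem_support_iff, T43_apply]
  ext d
  rw [coeff_zero, ← hcoeffH d, hHG, hzero]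

lemma part1 : ⇑q4 '' {p : S4 | p.IsSymmetric ∧ IsEven4 p}
    = ↑(Algebra.adjoin ℚ ({q4 (sym4 2), q4 (sym4 3) ^ 2, q4 (sym4 4)} : Set (S4 ⧸ I4))) := by
  apply Set.Subset.antisymm
  · rintro x ⟨p, ⟨hsym, heven⟩, rfl⟩
    exact key4 p hsym heven
  · intro x hx
    set A : Subalgebra ℚ S4 :=
      symmetricSubalgebra (Fin 4) ℚ ⊓ AlgHom.equalizer negVars4 (AlgHom.id ℚ S4) with hA
    have h2mem : sym4 2 ∈ A := by
      refine Algebra.mem_inf.2 ⟨(mem_symmetricSubalgebra _).2 (esymm_isSymmetric _ _ _), ?_⟩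
      refine (AlgHom.mem_equalizer _ _ _).2 ?_
      show negVars4 (sym4 2) = sym4 2
      rw [negVars4_esymm]; ring
    have h3mem : sym4 3 ^ 2 ∈ A := by
      refine Algebra.mem_inf.2 ⟨(mem_symmetricSubalgebra _).2 ?_, ?_⟩
      · rw [pow_two]
        exact (esymm_isSymmetric _ _ _).mul (esymm_isSymmetric _ _ _)
      · refine (AlgHom.mem_equalizer _ _ _).2 ?_
        show negVars4 (sym4 3 ^ 2) = sym4 3 ^ 2
        rw [map_pow, negVars4_esymm]; ring
    have h4mem : sym4 4 ∈ A := by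
      refine Algebra.mem_inf.2 ⟨(mem_symmetricSubalgebra _).2 (esymm_isSymmetric _ _ _), ?_⟩
      refine (AlgHom.mem_equalizer _ _ _).2 ?_
      show negVars4 (sym4 4) = sym4 4
      rw [negVars4_esymm]; ring
    have hle : Algebra.adjoin ℚ ({q4 (sym4 2), q4 (sym4 3) ^ 2, q4 (sym4 4)} : Set (S4 ⧸ I4))
        ≤ A.map (Ideal.Quotient.mkₐ ℚ I4) := by
      apply Algebra.adjoin_le
      rintro y hy
      simp only [Set.mem_insert_iff, Set.mem_singleton_iff] at hy
      rcases hy with rfl | rfl | rfl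
      · exact Subalgebra.mem_map.2 ⟨sym4 2, h2mem, rfl⟩
      · exact Subalgebra.mem_map.2 ⟨sym4 3 ^ 2, h3mem, by rw [map_pow]; rfl⟩
      · exact Subalgebra.mem_map.2 ⟨sym4 4, h4mem, rfl⟩
    obtain ⟨p, hpA, rfl⟩ := Subalgebra.mem_map.1 (hle hx)
    exact ⟨p, ⟨(mem_symmetricSubalgebra p).1 hpA.1, (AlgHom.mem_equalizer _ _ _).1 hpA.2⟩, rfl⟩

/-- The symmetric even polynomials in four variables, modulo the relation
`y₀ + y₁ + y₂ + y₃ = 0`, form the polynomial algebra `ℚ[τ₂, τ₃², τ₄]`: the image of the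
set of symmetric even polynomials under the quotient map is the subalgebra generated by
`q(e₂)`, `q(e₃)²` and `q(e₄)`, and these three elements are algebraically independent
over `ℚ`. (The computation of Moskovich–Ohtsuki underlying Theorem 3.2 of the paper,
case `n`, `j` odd.) -/
theorem symmetric_even_mod_e1_four_vars :
    (⇑q4 '' {p : S4 | p.IsSymmetric ∧ IsEven4 p}
      = ↑(Algebra.adjoin ℚ
          ({q4 (sym4 2), q4 (sym4 3) ^ 2, q4 (sym4 4)} : Set (S4 ⧸ I4))))
    ∧ AlgebraicIndependent ℚ ![q4 (sym4 2), q4 (sym4 3) ^ 2, q4 (sym4 4)] := by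
  exact ⟨part1, part2⟩
end

section
/- Let G be a finite loopless multigraph with first Betti number b₁(G) ≥ 1, and let S be a set of vertices of G each of which has degree at least 3. Then the number of cut vertices of G belonging to S is at least |S| − 2(b₁(G) − 1). (This is the strengthened combinatorial claim proved inside Proposition 4.13 of the paper.) -/
/-!
It suffices to show `|N| ≤ 2 (b₁(G) - 1)` for a nonempty set `N` of non-cut vertices of degree at
least `3`; induct on the number of edges. If `u` is a leaf with neighbour `x`, delete the edge
`ux`: this splits off `u`, so `b₁` is unchanged; `x ∉ N` since `x` separates `u` from its other
neighbours; and a cut vertex of `G - ux` other than `u`, `x` is one of `G`, so `N` stays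
admissible. Without leaves, the handshake lemma gives `∑ᵥ (deg v - 2) = 2 (|E| - |V|)`, where
vertices of `N` contribute at least `1`, isolated vertices `-2`, all others at least `0`, and
there are fewer than `c(G)` isolated vertices because `N ≠ ∅`.
-/

namespace MG

variable {V E : Type}

/-- Adjacency in the multigraph with incidence map `ε`: `v` and `w` are joined by some
edge. -/
def Adj (ε : E → Sym2 V) (v w : V) : Prop := ∃ e, ε e = s(v, w)

/-- The number of connected components: the number of equivalence classes of the
reflexive-transitive (equivalence) closure of adjacency. -/
noncomputable def numComponents (ε : E → Sym2 V) : ℕ := Nat.card (Quot (Adj ε))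

/-- The degree of a vertex: the number of edges incident to it. -/
noncomputable def deg (ε : E → Sym2 V) (v : V) : ℕ := Nat.card {e : E // v ∈ ε e}

/-- The first Betti number `b₁(G) = |E| - |V| + c(G)`, as an integer. -/
noncomputable def b1 [Finite V] [Finite E] (ε : E → Sym2 V) : ℤ :=
  (Nat.card E : ℤ) - Nat.card V + numComponents ε

/-- Adjacency in the vertex-deleted multigraph `G - v`. -/
def AdjDel (ε : E → Sym2 V) (v : V) (a b : {w : V // w ≠ v}) : Prop :=
  ∃ e, v ∉ ε e ∧ ε e = s(a.1, b.1)

/-- The number of connected components of `G - v`. -/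
noncomputable def numComponentsDel (ε : E → Sym2 V) (v : V) : ℕ :=
  Nat.card (Quot (AdjDel ε v))

/-- The first Betti number of `G - v`, as an integer. -/
noncomputable def b1Del [Finite V] [Finite E] (ε : E → Sym2 V) (v : V) : ℤ :=
  (Nat.card {e : E // v ∉ ε e} : ℤ) - Nat.card {w : V // w ≠ v} + numComponentsDel ε v

/-- `v` is a cut vertex if deleting it increases the number of connected components. -/
def IsCutVertex (ε : E → Sym2 V) (v : V) : Prop :=
  numComponents ε < numComponentsDel ε v

end MG

open Function Finset

section Quot

variable {α β : Type*}

theorem Nat.card_lt_card_of_surjective_of_not_injective [Finite α] {f : α → β}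
    (hf : Surjective f) (hf' : ¬ Injective f) : Nat.card β < Nat.card α :=
  (Nat.card_le_card_of_surjective f hf).lt_of_ne fun h =>
    hf' ((Nat.bijective_iff_surjective_and_card f).2 ⟨hf, h.symm⟩).1

theorem Quot.eq_of_mk_eq_mk_of_isolated {r : α → α → Prop} {u w : α}
    (hu : ∀ p q, r p q → p ≠ u ∧ q ≠ u) (h : Quot.mk r u = Quot.mk r w) : u = w := by
  have := congrArg (Quot.lift (· = u) fun p q hpq => by simp [(hu p q hpq).1, (hu p q hpq).2]) h
  simpa [eq_comm] using this

/-- Every class of `r` except that of `b` survives in `Quot s`, because `s` can only glue the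
classes of `a` and `b`. -/
theorem Nat.card_quot_le_card_quot_add_one [Finite α] {r s : α → α → Prop} {a b : α}
    (hsr : ∀ p q, s p q → r p q ∨ s(p, q) = s(a, b)) :
    Nat.card (Quot r) ≤ Nat.card (Quot s) + 1 := by
  classical
  let g : Quot r → Quot r := update id (Quot.mk r b) (Quot.mk r a)
  have hg : ∀ p q, s p q → g (Quot.mk r p) = g (Quot.mk r q) := by
    intro p q hpq
    rcases hsr p q hpq with h | h
    · rw [Quot.sound h]
    · rcases Sym2.eq_iff.1 h with ⟨rfl, rfl⟩ | ⟨rfl, rfl⟩ <;> simp [g, update_apply]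
  let h : Quot s → Quot r := Quot.lift (fun p => g (Quot.mk r p)) hg
  have hsurj : Surjective fun o : Option (Quot s) => o.elim (Quot.mk r b) h := by
    refine Quot.ind fun c => ?_
    by_cases hc : Quot.mk r c = Quot.mk r b
    · exact ⟨none, hc.symm⟩
    · exact ⟨some (Quot.mk s c), by simp [h, g, hc]⟩
  simpa using Nat.card_le_card_of_surjective _ hsurj

end Quot

namespace MG

variable {V E : Type} {ε : E → Sym2 V}

theorem deg_eq_zero_iff [Finite E] {v : V} : deg ε v = 0 ↔ ∀ e, v ∉ ε e := by
  rw [deg, Finite.card_eq_zero_iff, isEmpty_subtype]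

theorem Adj.ne_of_forall_notMem {u p q : V} (hu : ∀ e, u ∉ ε e) (h : Adj ε p q) :
    p ≠ u ∧ q ≠ u := by
  obtain ⟨e, he⟩ := h
  constructor <;> rintro rfl <;> exact hu e (by simp [he])

theorem eq_of_mk_eq_mk_of_forall_notMem {u w : V} (hu : ∀ e, u ∉ ε e)
    (h : Quot.mk (Adj ε) u = Quot.mk (Adj ε) w) : u = w :=
  Quot.eq_of_mk_eq_mk_of_isolated (fun _ _ => Adj.ne_of_forall_notMem hu) h

theorem sum_deg_eq_two_mul_card [Fintype V] [Finite E] (hloop : ∀ e, ¬ (ε e).IsDiag) :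
    ∑ v, deg ε v = 2 * Nat.card E := by
  classical
  have := Fintype.ofFinite E
  calc ∑ v, deg ε v = ∑ v, #{e | v ∈ ε e} := by
        simp only [deg, Nat.card_eq_fintype_card, Fintype.card_subtype]
    _ = ∑ e, #{v | v ∈ ε e} := sum_card_bipartiteAbove_eq_sum_card_bipartiteBelow _
    _ = ∑ e, #(ε e).toFinset := by congr! 2; ext; simp
    _ = 2 * Nat.card E := by
        simp [Sym2.card_toFinset_of_not_isDiag _ (hloop _), Nat.card_eq_fintype_card, mul_comm]

theorem card_deg_eq_zero_add_one_le_numComponents [Fintype V]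
    [DecidablePred fun v => deg ε v = 0] [Finite E] {v₀ : V} (hv₀ : deg ε v₀ ≠ 0) :
    #{v | deg ε v = 0} + 1 ≤ numComponents ε := by
  classical
  have := Fintype.ofFinite (Quot (Adj ε))
  set I : Finset V := {v | deg ε v = 0}
  have hv₀I : v₀ ∉ I := by simpa [I] using hv₀
  have hinj : Set.InjOn (Quot.mk (Adj ε)) ↑(insert v₀ I) := by
    intro p hp q hq hpq
    simp only [I, coe_insert, coe_filter, mem_univ, true_and, Set.mem_insert_iff] at hp hq
    rcases hp with rfl | hp
    · rcases hq with rfl | hq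
      · rfl
      · exact (eq_of_mk_eq_mk_of_forall_notMem (deg_eq_zero_iff.1 hq) hpq.symm).symm
    · exact eq_of_mk_eq_mk_of_forall_notMem (deg_eq_zero_iff.1 hp) hpq
  calc #I + 1 = #(insert v₀ I) := (card_insert_of_notMem hv₀I).symm
    _ ≤ #(univ : Finset (Quot (Adj ε))) := card_le_card_of_injOn _ (by simp) hinj
    _ = numComponents ε := by rw [card_univ, numComponents, Nat.card_eq_fintype_card]

theorem ncard_le_two_mul_b1_sub_one_of_forall_deg_ne_one [Finite V] [Finite E]
    (hloop : ∀ e, ¬ (ε e).IsDiag) (hleaf : ∀ v, deg ε v ≠ 1) {S : Set V}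
    (hS : ∀ v ∈ S, 3 ≤ deg ε v) (hSne : S.Nonempty) : (S.ncard : ℤ) ≤ 2 * (b1 ε - 1) := by
  classical
  have := Fintype.ofFinite V
  obtain ⟨v₀, hv₀⟩ := hSne
  have hI : #{v | deg ε v = 0} + 1 ≤ numComponents ε :=
    card_deg_eq_zero_add_one_le_numComponents (v₀ := v₀) (by have := hS v₀ hv₀; omega)
  have hsum : ∑ v, (deg ε v : ℤ) = 2 * Nat.card E := by exact_mod_cast sum_deg_eq_two_mul_card hloop
  have hpt : ∀ v, (if v ∈ S then 1 else 0 : ℤ) ≤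
      (deg ε v - 2) + if deg ε v = 0 then 2 else 0 := by
    intro v
    have := hleaf v
    split_ifs with h1 h2 <;> first | omega | have := hS v h1; omega
  calc (S.ncard : ℤ) = ∑ v, if v ∈ S then 1 else 0 := by
        simp [Set.ncard_eq_toFinset_card', Set.toFinset_card]
    _ ≤ ∑ v, ((deg ε v - 2 : ℤ) + if deg ε v = 0 then 2 else 0) := sum_le_sum fun v _ => hpt v
    _ = 2 * Nat.card E - 2 * Nat.card V + 2 * #{v | deg ε v = 0} := by
        simp [sum_add_distrib, hsum, sum_ite, Nat.card_eq_fintype_card]; ring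
    _ ≤ 2 * (b1 ε - 1) := by rw [b1]; omega

def deleteEdge (ε : E → Sym2 V) (e₀ : E) : {e // e ≠ e₀} → Sym2 V := fun e => ε e

theorem deg_deleteEdge {e₀ : E} {v : V} (hv : v ∉ ε e₀) : deg (deleteEdge ε e₀) v = deg ε v :=
  Nat.card_congr <| Equiv.subtypeSubtypeEquivSubtype (p := (· ≠ e₀)) (q := (v ∈ ε ·))
    fun he => by rintro rfl; exact hv he

theorem card_deleteEdge_add_one [Finite E] (e₀ : E) :
    Nat.card {e // e ≠ e₀} + 1 = Nat.card E := by
  classical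
  rw [← Finite.card_option, Nat.card_congr (Equiv.optionSubtypeNe e₀)]

theorem numComponents_deleteEdge_le [Finite V] {e₀ : E} {a b : V} (he₀ : ε e₀ = s(a, b)) :
    numComponents (deleteEdge ε e₀) ≤ numComponents ε + 1 :=
  Nat.card_quot_le_card_quot_add_one (a := a) (b := b) fun p q ⟨e, he⟩ => by
    by_cases h : e = e₀
    · subst h
      exact Or.inr (he.symm.trans he₀)
    · exact Or.inl ⟨⟨e, h⟩, he⟩

theorem numComponentsDel_deleteEdge_le [Finite V] {e₀ : E} {a b v : V} (he₀ : ε e₀ = s(a, b))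
    (hv : v ∉ ε e₀) : numComponentsDel (deleteEdge ε e₀) v ≤ numComponentsDel ε v + 1 := by
  have ha : a ≠ v := fun h => hv (by simp [he₀, h])
  have hb : b ≠ v := fun h => hv (by simp [he₀, h])
  refine Nat.card_quot_le_card_quot_add_one (a := ⟨a, ha⟩) (b := ⟨b, hb⟩)
    fun p q ⟨e, hve, he⟩ => ?_
  by_cases h : e = e₀
  · subst h
    exact Or.inr (Sym2.map.injective Subtype.val_injective (he.symm.trans he₀))
  · exact Or.inl ⟨⟨e, h⟩, hve, he⟩

theorem numComponents_lt_numComponents_deleteEdge [Finite V] {e₀ : E} {u x : V}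
    (he₀ : ε e₀ = s(u, x)) (hux : u ≠ x) (hu : ∀ e, u ∈ ε e → e = e₀) :
    numComponents ε < numComponents (deleteEdge ε e₀) := by
  let φ : Quot (Adj (deleteEdge ε e₀)) → Quot (Adj ε) := Quot.map id fun _ _ ⟨e, he⟩ => ⟨e, he⟩
  refine Nat.card_lt_card_of_surjective_of_not_injective (f := φ)
    (Quot.ind fun p => ⟨Quot.mk _ p, rfl⟩) fun hφ => hux ?_
  exact eq_of_mk_eq_mk_of_forall_notMem (fun e he => e.2 (hu e he)) (hφ (Quot.sound ⟨e₀, he₀⟩))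

theorem b1_deleteEdge [Finite V] [Finite E] {e₀ : E} {u x : V} (he₀ : ε e₀ = s(u, x))
    (hux : u ≠ x) (hu : ∀ e, u ∈ ε e → e = e₀) : b1 (deleteEdge ε e₀) = b1 ε := by
  have hle := numComponents_deleteEdge_le he₀
  have hlt := numComponents_lt_numComponents_deleteEdge he₀ hux hu
  have hcard := card_deleteEdge_add_one e₀
  simp only [b1]
  omega

theorem IsCutVertex.of_deleteEdge [Finite V] {e₀ : E} {a b v : V} (he₀ : ε e₀ = s(a, b))
    (hv : v ∉ ε e₀) (hbridge : numComponents ε < numComponents (deleteEdge ε e₀))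
    (h : IsCutVertex (deleteEdge ε e₀) v) : IsCutVertex ε v := by
  have := numComponentsDel_deleteEdge_le he₀ hv
  have := numComponents_deleteEdge_le he₀
  unfold IsCutVertex at *
  omega

theorem isCutVertex_of_adj_leaf [Finite V] [Finite E] (hloop : ∀ e, ¬ (ε e).IsDiag) {e₀ : E}
    {u x : V} (he₀ : ε e₀ = s(u, x)) (hu : ∀ e, u ∈ ε e → e = e₀) (hx : 2 ≤ deg ε x) :
    IsCutVertex ε x := by
  have hux : u ≠ x := fun h => hloop e₀ (by simp [he₀, h])
  have : Nontrivial {e // x ∈ ε e} := Finite.one_lt_card_iff_nontrivial.1 hx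
  obtain ⟨⟨e₁, hxe₁⟩, he₁⟩ := exists_ne (⟨e₀, by simp [he₀]⟩ : {e // x ∈ ε e})
  obtain ⟨y, he₁y⟩ := Sym2.mem_iff_exists.1 hxe₁
  have hxy : x ≠ y := fun h => hloop e₁ (by simp [he₁y, h])
  have hyu : y ≠ u := fun h => he₁ (Subtype.ext (hu e₁ (by simp [he₁y, h])))
  let ψ : Quot (AdjDel ε x) → Quot (Adj ε) := Quot.map Subtype.val fun _ _ ⟨e, _, he⟩ => ⟨e, he⟩
  have hψ : Surjective ψ := Quot.ind fun w => by
    by_cases hw : w = x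
    · rw [hw]
      exact ⟨Quot.mk _ ⟨u, hux⟩, Quot.sound ⟨e₀, he₀⟩⟩
    · exact ⟨Quot.mk _ ⟨w, hw⟩, rfl⟩
  have hu_isolated : ∀ p q, AdjDel ε x p q → p ≠ ⟨u, hux⟩ ∧ q ≠ ⟨u, hux⟩ := by
    rintro p q ⟨e, hxe, he⟩
    have hue : u ∉ ε e := fun h => hxe (hu e h ▸ by simp [he₀])
    constructor <;> rintro rfl <;> exact hue (by simp [he])
  refine Nat.card_lt_card_of_surjective_of_not_injective hψ fun hinj => hyu ?_
  have := hinj (a₁ := Quot.mk _ ⟨u, hux⟩) (a₂ := Quot.mk _ ⟨y, hxy.symm⟩)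
    ((Quot.sound ⟨e₀, he₀⟩).trans (Quot.sound ⟨e₁, he₁y⟩))
  exact (congrArg Subtype.val (Quot.eq_of_mk_eq_mk_of_isolated hu_isolated this)).symm

theorem ncard_le_two_mul_b1_sub_one_of_forall_not_isCutVertex [Finite V] [Finite E]
    (hloop : ∀ e, ¬ (ε e).IsDiag) {S : Set V} (hS : ∀ v ∈ S, 3 ≤ deg ε v) (hSne : S.Nonempty)
    (hcut : ∀ v ∈ S, ¬ IsCutVertex ε v) : (S.ncard : ℤ) ≤ 2 * (b1 ε - 1) := by
  induction hn : Nat.card E using Nat.strong_induction_on generalizing E with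
  | _ n ih =>
  by_cases hleaf : ∃ u, deg ε u = 1
  · obtain ⟨u, hu₁⟩ := hleaf
    obtain ⟨⟨e₀, hue₀⟩, hu⟩ := Nat.card_eq_one_iff_exists.1 hu₁
    replace hu : ∀ e, u ∈ ε e → e = e₀ := fun e he => congrArg Subtype.val (hu ⟨e, he⟩)
    obtain ⟨x, he₀⟩ := Sym2.mem_iff_exists.1 hue₀
    have hux : u ≠ x := fun h => hloop e₀ (by simp [he₀, h])
    have hS₀ : ∀ v ∈ S, v ∉ ε e₀ := by
      intro v hv hve
      rcases Sym2.mem_iff.1 (he₀ ▸ hve) with rfl | rfl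
      · have := hS v hv
        omega
      · exact hcut v hv (isCutVertex_of_adj_leaf hloop he₀ hu (by have := hS v hv; omega))
    rw [← b1_deleteEdge he₀ hux hu]
    have hbridge := numComponents_lt_numComponents_deleteEdge he₀ hux hu
    refine ih _ ?_ (ε := deleteEdge ε e₀) (fun e => hloop e)
      (fun v hv => deg_deleteEdge (hS₀ v hv) ▸ hS v hv)
      (fun v hv hc => hcut v hv (hc.of_deleteEdge he₀ (hS₀ v hv) hbridge)) rfl
    rw [← hn, ← card_deleteEdge_add_one e₀]
    omega
  · exact ncard_le_two_mul_b1_sub_one_of_forall_deg_ne_one hloop (fun v hv => hleaf ⟨v, hv⟩)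
      hS hSne

end MG

/-- The strengthened combinatorial claim proved inside Proposition 4.13 of the paper:
in a finite loopless multigraph `G` with first Betti number `b₁(G) ≥ 1`, for any set `S`
of vertices each of degree at least `3`, the number of cut vertices belonging to `S` is
at least `|S| - 2(b₁(G) - 1)`. -/
theorem cutVertices_lower_bound {V E : Type} [Finite V] [Finite E]
    (ε : E → Sym2 V) (hloop : ∀ e, ¬ (ε e).IsDiag)
    (hb1 : 1 ≤ MG.b1 ε)
    (S : Set V) (hS : ∀ v ∈ S, 3 ≤ MG.deg ε v) :
    (S.ncard : ℤ) - 2 * (MG.b1 ε - 1) ≤ ({v ∈ S | MG.IsCutVertex ε v}).ncard := by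
  set N := {v ∈ S | ¬ MG.IsCutVertex ε v}
  have hsplit : ({v ∈ S | MG.IsCutVertex ε v}).ncard + N.ncard = S.ncard :=
    Set.ncard_inter_add_ncard_sdiff_eq_ncard S {v | MG.IsCutVertex ε v}
  have hN : (N.ncard : ℤ) ≤ 2 * (MG.b1 ε - 1) := by
    rcases N.eq_empty_or_nonempty with hN | hN
    · rw [hN, Set.ncard_empty]
      omega
    · exact MG.ncard_le_two_mul_b1_sub_one_of_forall_not_isCutVertex hloop
        (fun v hv => hS v hv.1) hN fun v hv => hv.2
  omega
end

section
/- Let G be a connected finite loopless multigraph with first Betti number b₁(G) ≥ 1, and let S be a set of vertices of G each of which has degree at least 3. If |S| > 2(b₁(G) − 1), then at least one vertex of S is a cut vertex of G. (This is the combinatorial content of Proposition 4.13 of the paper.) -/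
/-! Prune leaves. If every vertex has degree at least `2`, the handshake lemma gives
`∑ (deg v - 2) = 2 (b₁ - 1)`, and each vertex of `S` contributes at least `1` to this sum.
Otherwise, since `G` is connected with `b₁ ≥ 1`, there is a leaf `u` with neighbour `w`.
If `w ∈ S`, deleting `w` separates `u` from the other neighbours of `w`. If not, `G - u` is
connected with the same `b₁` and the same degrees on `S`, and a cut vertex of `G - u` other
than `w` is a cut vertex of `G`. The induction runs over the induced subgraphs `G[W]` of the
fixed graph, so that deleting vertices only shrinks `W`. -/

theorem Nat.card_quot_le_of_surjective {α β : Type*} {r : α → α → Prop} {s : β → β → Prop}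
    [Finite (Quot r)] (f : α → β) (hf : Function.Surjective f)
    (hrs : ∀ a b, r a b → Quot.mk s (f a) = Quot.mk s (f b)) :
    Nat.card (Quot s) ≤ Nat.card (Quot r) :=
  Nat.card_le_card_of_surjective (Quot.lift _ hrs)
    (Function.Surjective.of_comp (g := Quot.mk r) (Quot.mk_surjective.comp hf))

namespace MG

variable {V E : Type} (ε : E → Sym2 V)

/- The invariants of the induced subgraph `G[W]`, whose edges are those with both ends
in `W`. -/

def edgesIn (W : Set V) : Set E := {e | ∀ x ∈ ε e, x ∈ W}

noncomputable def degIn (W : Set V) (v : V) : ℕ := {e ∈ edgesIn ε W | v ∈ ε e}.ncard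

noncomputable def compIn (W : Set V) : ℕ := Nat.card (Quot fun a b : W => Adj ε a b)

noncomputable def b1In (W : Set V) : ℤ := ((edgesIn ε W).ncard : ℤ) - W.ncard + compIn ε W

def IsPendantIn (W : Set V) (u w : V) : Prop := ∀ e ∈ edgesIn ε W, u ∈ ε e → ε e = s(u, w)

variable {ε}

theorem mem_edgesIn {W : Set V} {e : E} {a b : V} (he : ε e = s(a, b)) (ha : a ∈ W)
    (hb : b ∈ W) : e ∈ edgesIn ε W := by
  intro x hx
  rw [he, Sym2.mem_iff] at hx
  rcases hx with rfl | rfl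
  exacts [ha, hb]

theorem edgesIn_mono {W W' : Set V} (h : W' ⊆ W) : edgesIn ε W' ⊆ edgesIn ε W :=
  fun _ he x hx => h (he x hx)

@[simp]
theorem edgesIn_univ : edgesIn ε Set.univ = Set.univ := by
  ext; simp [edgesIn]

theorem edgesIn_sdiff_singleton (W : Set V) (u : V) :
    edgesIn ε (W \ {u}) = {e ∈ edgesIn ε W | u ∉ ε e} := by
  ext e
  simp only [edgesIn, Set.mem_sdiff, Set.mem_singleton_iff, Set.mem_ofPred_eq]
  exact ⟨fun h => ⟨fun x hx => (h x hx).1, fun hu => (h u hu).2 rfl⟩,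
    fun ⟨h, hu⟩ x hx => ⟨h x hx, by rintro rfl; exact hu hx⟩⟩

theorem degIn_univ (v : V) : degIn ε Set.univ v = deg ε v := by
  simp only [degIn, edgesIn_univ, Set.mem_univ, true_and]
  rfl

theorem compIn_univ : compIn ε Set.univ = numComponents ε :=
  Nat.card_congr (Quot.congr (Equiv.Set.univ V) fun _ _ => Iff.rfl)

theorem compIn_compl_singleton (v : V) : compIn ε {v}ᶜ = numComponentsDel ε v :=
  Nat.card_congr <| Quot.congr (Equiv.refl _) fun a b =>
    ⟨fun ⟨e, he⟩ => ⟨e, by simp [he, Sym2.mem_iff, Ne.symm a.2, Ne.symm b.2], he⟩,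
      fun ⟨e, _, he⟩ => ⟨e, he⟩⟩

theorem b1In_univ [Finite V] [Finite E] : b1In ε Set.univ = b1 ε := by
  simp [b1In, b1, compIn_univ, Set.ncard_univ]

theorem sum_degIn [Finite E] (hloop : ∀ e, ¬ (ε e).IsDiag) (W : Set V) [Fintype W] :
    ∑ v ∈ W.toFinset, degIn ε W v = 2 * (edgesIn ε W).ncard := by
  classical
  have := Fintype.ofFinite E
  have hdeg : ∀ v, degIn ε W v =
      ((edgesIn ε W).toFinset.bipartiteAbove (fun v e => v ∈ ε e) v).card := by
    intro v
    rw [degIn, ← Set.ncard_coe_finset]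
    simp [Finset.bipartiteAbove]
  have hpair : ∀ e ∈ (edgesIn ε W).toFinset,
      (W.toFinset.bipartiteBelow (fun v e => v ∈ ε e) e).card = 2 := by
    intro e he
    rw [← Sym2.card_toFinset_of_not_isDiag _ (hloop e)]
    congr 1
    ext v
    simp only [Finset.mem_bipartiteBelow, Set.mem_toFinset, Sym2.mem_toFinset]
    exact ⟨And.right, fun hv => ⟨Set.mem_toFinset.mp he v hv, hv⟩⟩
  simp_rw [hdeg, Finset.sum_card_bipartiteAbove_eq_sum_card_bipartiteBelow,
    Finset.sum_congr rfl hpair, Finset.sum_const, smul_eq_mul, Set.ncard_eq_toFinset_card',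
    mul_comm]

theorem ncard_le_two_mul_b1In_sub_compIn [Finite V] [Finite E] (hloop : ∀ e, ¬ (ε e).IsDiag)
    {W S : Set V} (hW : ∀ v ∈ W, 2 ≤ degIn ε W v) (hSW : S ⊆ W)
    (hS : ∀ v ∈ S, 3 ≤ degIn ε W v) : (S.ncard : ℤ) ≤ 2 * (b1In ε W - compIn ε W) := by
  classical
  have := Fintype.ofFinite V
  have hSW' : S.toFinset ⊆ W.toFinset := Set.toFinset_subset_toFinset.mpr hSW
  have hcount : 2 * W.toFinset.card + S.toFinset.card ≤ 2 * (edgesIn ε W).ncard := by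
    rw [← sum_degIn hloop, ← Finset.sum_sdiff hSW']
    have h2 := Finset.card_nsmul_le_sum (W.toFinset \ S.toFinset) (degIn ε W ·) 2
      fun v hv => hW v (by simpa using (Finset.mem_sdiff.mp hv).1)
    have h3 := Finset.card_nsmul_le_sum S.toFinset (degIn ε W ·) 3 (by simpa using hS)
    have hcard := Finset.card_sdiff_add_card_eq_card hSW'
    simp only [smul_eq_mul] at h2 h3
    omega
  simp only [b1In, Set.ncard_eq_toFinset_card'] at hcount ⊢
  omega

theorem one_le_compIn [Finite V] {W : Set V} (hW : W.Nonempty) : 1 ≤ compIn ε W :=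
  have ⟨x, hx⟩ := hW
  Nat.card_pos_iff.2 ⟨⟨Quot.mk _ ⟨x, hx⟩⟩, inferInstance⟩

theorem one_lt_compIn_of_isolated [Finite V] {W : Set V} {u x : V} (hu : u ∈ W) (hx : x ∈ W)
    (hxu : x ≠ u) (hiso : ∀ e ∈ edgesIn ε W, u ∉ ε e) : 1 < compIn ε W := by
  have hcomp : ∀ a b : W, Adj ε a b → (a = ⟨u, hu⟩ ↔ b = ⟨u, hu⟩) := by
    rintro a b ⟨e, he⟩
    have := hiso e (mem_edgesIn he a.2 b.2)
    rw [he] at this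
    constructor <;> rintro rfl <;> simp at this
  have hne : Quot.mk (fun a b : W => Adj ε a b) ⟨u, hu⟩ ≠ Quot.mk _ ⟨x, hx⟩ := fun h => by
    simpa [Subtype.ext_iff, hxu] using
      congrArg (Quot.lift (· = ⟨u, hu⟩) fun a b h => propext (hcomp a b h)) h
  exact Finite.one_lt_card_iff_nontrivial.mpr ⟨_, _, hne⟩

theorem degIn_pos [Finite V] [Finite E] (hloop : ∀ e, ¬ (ε e).IsDiag) {W : Set V}
    (hconn : compIn ε W = 1) (hb1 : 1 ≤ b1In ε W) {u : V} (hu : u ∈ W) : 0 < degIn ε W u := by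
  rw [degIn, Set.ncard_pos]
  by_contra hnone
  have hiso : ∀ e ∈ edgesIn ε W, u ∉ ε e := fun e he hue => hnone ⟨e, he, hue⟩
  have hWu : W = {u} := Set.eq_singleton_iff_unique_mem.mpr ⟨hu, fun x hx =>
    by_contra fun hxu => (one_lt_compIn_of_isolated hu hx hxu hiso).ne' hconn⟩
  have hE : edgesIn ε W = ∅ := by
    refine Set.eq_empty_of_forall_notMem fun e he => hloop e ?_
    obtain ⟨x, y, hxy⟩ := Sym2.exists.mp ⟨ε e, rfl⟩
    rw [hxy, Sym2.mk_isDiag_iff]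
    have hx := he x (by simp [hxy])
    have hy := he y (by simp [hxy])
    simp_all
  subst hWu
  simp [b1In, hconn, hE] at hb1

theorem ncard_edgesIn_sdiff_singleton_add_degIn [Finite E] (W : Set V) (u : V) :
    (edgesIn ε (W \ {u})).ncard + degIn ε W u = (edgesIn ε W).ncard := by
  rw [edgesIn_sdiff_singleton, add_comm]
  exact Set.ncard_inter_add_ncard_sdiff_eq_ncard (edgesIn ε W) {e | u ∈ ε e}

theorem b1In_sdiff_singleton [Finite V] [Finite E] {W : Set V} {u : V} (hu : u ∈ W) :
    b1In ε (W \ {u}) + degIn ε W u + compIn ε W = b1In ε W + 1 + compIn ε (W \ {u}) := by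
  have hE := ncard_edgesIn_sdiff_singleton_add_degIn (ε := ε) W u
  have hV := Set.ncard_sdiff_singleton_add_one hu
  simp only [b1In]
  omega

theorem degIn_sdiff_singleton {W : Set V} {u v : V}
    (h : ∀ e ∈ edgesIn ε W, v ∈ ε e → u ∉ ε e) : degIn ε (W \ {u}) v = degIn ε W v := by
  simp only [degIn, edgesIn_sdiff_singleton]
  congr 1
  ext e
  simp only [Set.mem_ofPred_eq]
  exact ⟨fun ⟨⟨he, _⟩, hv⟩ => ⟨he, hv⟩, fun ⟨he, hv⟩ => ⟨⟨he, h e he hv⟩, hv⟩⟩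

theorem IsPendantIn.mono {W W' : Set V} {u w : V} (hp : IsPendantIn ε W u w) (h : W' ⊆ W) :
    IsPendantIn ε W' u w :=
  fun e he => hp e (edgesIn_mono h he)

theorem exists_isPendantIn_of_degIn_eq_one (hloop : ∀ e, ¬ (ε e).IsDiag) {W : Set V} {u : V}
    (h : degIn ε W u = 1) : ∃ w ∈ W, w ≠ u ∧ IsPendantIn ε W u w := by
  obtain ⟨e₀, he₀⟩ := Set.ncard_eq_one.mp h
  have hmem : ∀ e, e ∈ edgesIn ε W ∧ u ∈ ε e ↔ e = e₀ := fun e => Set.ext_iff.mp he₀ e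
  obtain ⟨hWe₀, hue₀⟩ := (hmem e₀).mpr rfl
  obtain ⟨w, hw⟩ := Sym2.mem_iff_exists.mp hue₀
  refine ⟨w, hWe₀ w (by simp [hw]), ?_, fun e he hue => (hmem e).mp ⟨he, hue⟩ ▸ hw⟩
  rintro rfl
  exact hloop e₀ (by simp [hw])

-- Contracting the pendant edges at `u` maps `G[W]` onto `G[W \ {u}]`.
theorem compIn_sdiff_singleton_le [Finite V] {W : Set V} {u w : V} (hp : IsPendantIn ε W u w)
    (hw : w ∈ W) (hwu : w ≠ u) : compIn ε (W \ {u}) ≤ compIn ε W := by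
  classical
  let f : W → ↥(W \ {u}) := fun x => if hx : x.1 = u then ⟨w, hw, hwu⟩ else ⟨x.1, x.2, hx⟩
  refine Nat.card_quot_le_of_surjective f (fun x => ⟨⟨x.1, x.2.1⟩, dif_neg x.2.2⟩) ?_
  rintro a b ⟨e, he⟩
  by_cases hue : u ∈ ε e
  · have hab := he.symm.trans (hp e (mem_edgesIn he a.2 b.2) hue)
    have hf : ∀ c : W, c.1 = u ∨ c.1 = w → f c = ⟨w, hw, hwu⟩ := by
      rintro c (hc | hc)
      · exact dif_pos hc
      · simp [f, hc, hwu]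
    rcases Sym2.eq_iff.mp hab with ⟨ha, hb⟩ | ⟨ha, hb⟩
    · rw [hf a (.inl ha), hf b (.inr hb)]
    · rw [hf a (.inr ha), hf b (.inl hb)]
  · have hau : a.1 ≠ u := fun h => hue (by simp [he, h])
    have hbu : b.1 ≠ u := fun h => hue (by simp [he, h])
    exact Quot.sound (by simpa [f, hau, hbu] using ⟨e, he⟩)

theorem one_lt_compIn_sdiff_of_isPendantIn [Finite V] [Finite E]
    (hloop : ∀ e, ¬ (ε e).IsDiag) {W : Set V} {u w : V} (hp : IsPendantIn ε W u w) (hu : u ∈ W)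
    (hdeg : degIn ε W u < degIn ε W w) : 1 < compIn ε (W \ {w}) := by
  obtain ⟨e, ⟨hWe, hwe⟩, hue⟩ : ∃ e ∈ {e ∈ edgesIn ε W | w ∈ ε e}, u ∉ ε e := by
    by_contra! h
    exact hdeg.not_ge (Set.ncard_le_ncard fun e he => ⟨he.1, h e he⟩)
  obtain ⟨x, hx⟩ := Sym2.mem_iff_exists.mp hwe
  have hxw : x ≠ w := by rintro rfl; exact hloop e (by simp [hx])
  have hxu : x ≠ u := by rintro rfl; exact hue (by simp [hx])
  have hwu : w ≠ u := by rintro rfl; exact hue hwe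
  refine one_lt_compIn_of_isolated (x := x) ⟨hu, hwu.symm⟩ ⟨hWe x (by simp [hx]), hxw⟩ hxu ?_
  intro e' he' hue'
  have hwe' : w ∈ ε e' := by simp [hp e' (edgesIn_mono Set.sdiff_subset he') hue']
  exact (he' w hwe').2 rfl

theorem exists_lt_compIn_sdiff_singleton [Finite V] [Finite E] (hloop : ∀ e, ¬ (ε e).IsDiag)
    (W : Set V) (hconn : compIn ε W = 1) (hb1 : 1 ≤ b1In ε W) (S : Set V) (hSW : S ⊆ W)
    (hS : ∀ v ∈ S, 3 ≤ degIn ε W v) (hcard : 2 * (b1In ε W - 1) < (S.ncard : ℤ)) :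
    ∃ v ∈ S, compIn ε W < compIn ε (W \ {v}) := by
  obtain ⟨u, huW, hu2⟩ : ∃ u ∈ W, degIn ε W u < 2 := by
    by_contra! hmin
    have := ncard_le_two_mul_b1In_sub_compIn hloop hmin hSW hS
    omega
  have hu1 : degIn ε W u = 1 := by have := degIn_pos hloop hconn hb1 huW; omega
  obtain ⟨w, hwW, hwu, hp⟩ := exists_isPendantIn_of_degIn_eq_one hloop hu1
  by_cases hwS : w ∈ S
  · refine ⟨w, hwS, hconn ▸ one_lt_compIn_sdiff_of_isPendantIn hloop hp huW ?_⟩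
    have := hS w hwS
    omega
  have huS : u ∉ S := fun h => by have := hS u h; omega
  have hconn' : compIn ε (W \ {u}) = 1 :=
    le_antisymm (hconn ▸ compIn_sdiff_singleton_le hp hwW hwu) (one_le_compIn ⟨w, hwW, hwu⟩)
  have hb1' : b1In ε (W \ {u}) = b1In ε W := by
    have := b1In_sdiff_singleton (ε := ε) huW
    omega
  have hdeg : ∀ v ∈ S, degIn ε (W \ {u}) v = degIn ε W v := by
    intro v hv
    refine degIn_sdiff_singleton fun e he hve hue => ?_
    rw [hp e he hue, Sym2.mem_iff] at hve
    rcases hve with rfl | rfl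
    exacts [huS hv, hwS hv]
  obtain ⟨v, hvS, hv⟩ := exists_lt_compIn_sdiff_singleton hloop (W \ {u}) hconn' (hb1' ▸ hb1) S
    (fun v hv => ⟨hSW hv, fun h => huS (h ▸ hv)⟩) (fun v hv => hdeg v hv ▸ hS v hv)
    (hb1' ▸ hcard)
  refine ⟨v, hvS, ?_⟩
  have hwv : w ≠ v := fun h => hwS (h ▸ hvS)
  calc compIn ε W = compIn ε (W \ {u}) := hconn.trans hconn'.symm
    _ < compIn ε ((W \ {u}) \ {v}) := hv
    _ = compIn ε ((W \ {v}) \ {u}) := by rw [Set.sdiff_sdiff_comm]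
    _ ≤ compIn ε (W \ {v}) :=
      compIn_sdiff_singleton_le (hp.mono Set.sdiff_subset) ⟨hwW, hwv⟩ hwu
termination_by W.ncard
decreasing_by exact Set.ncard_sdiff_singleton_lt_of_mem huW

end MG

/-- Proposition 4.13 of the paper: in a connected finite loopless multigraph `G` with
first Betti number `b₁(G) ≥ 1`, if a set `S` of vertices each of degree at least `3` has
more than `2(b₁(G) - 1)` elements, then some vertex of `S` is a cut vertex of `G`. -/
theorem exists_cutVertex {V E : Type} [Finite V] [Finite E]
    (ε : E → Sym2 V) (hloop : ∀ e, ¬ (ε e).IsDiag)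
    (hconn : MG.numComponents ε = 1) (hb1 : 1 ≤ MG.b1 ε)
    (S : Set V) (hS : ∀ v ∈ S, 3 ≤ MG.deg ε v)
    (hcard : 2 * (MG.b1 ε - 1) < (S.ncard : ℤ)) :
    ∃ v ∈ S, MG.IsCutVertex ε v := by
  rw [← MG.compIn_univ] at hconn
  rw [← MG.b1In_univ] at hb1 hcard
  simp only [← MG.degIn_univ] at hS
  obtain ⟨v, hvS, hv⟩ :=
    MG.exists_lt_compIn_sdiff_singleton hloop _ hconn hb1 S (Set.subset_univ S) hS hcard
  refine ⟨v, hvS, ?_⟩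
  rwa [MG.IsCutVertex, ← MG.compIn_univ, ← MG.compIn_compl_singleton, Set.compl_eq_univ_sdiff]
end
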